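/- arXiv:2204.07497 — 2 statements merged into one kernel-verified Lean document; each statement's English description precedes it below -/
import Mathlib

section
/- Let u : ℝ × ℝ³ → ℝ³ be twice continuously differentiable (jointly in (t,x)) and let p̃ : ℝ × ℝ³ → ℝ be continuously differentiable. Suppose that for all t ∈ ℝ and x ∈ Ω = [0,1]³ the ideal (Euler) equations hold: ∂ₜu − u × (curl u) + ∇(½|u|² + p̃) = 0 and div u = 0, together with the boundary conditions u × n = 0 and ½|u|² + p̃ = 0 on ∂Ω for all t. Then the kinetic energy is conserved: for every t ∈ ℝ, ∫_Ω |u(t,x)|² dx = ∫_Ω |u(0,x)|² dx. -/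
open MeasureTheory

noncomputable section

/-- Points of ℝ³, represented as functions `Fin 3 → ℝ`. -/
abbrev R3 : Type := Fin 3 → ℝ

/-- Partial derivative in the `i`-th coordinate direction. -/
noncomputable def pd (i : Fin 3) (f : R3 → ℝ) (x : R3) : ℝ :=
  fderiv ℝ f x (Pi.single i 1)

/-- Curl of a vector field on ℝ³. -/
noncomputable def vcurl (v : R3 → R3) (x : R3) : R3 :=
  ![pd 1 (fun y => v y 2) x - pd 2 (fun y => v y 1) x,
    pd 2 (fun y => v y 0) x - pd 0 (fun y => v y 2) x,
    pd 0 (fun y => v y 1) x - pd 1 (fun y => v y 0) x]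

/-- Divergence of a vector field on ℝ³. -/
noncomputable def vdiv (v : R3 → R3) (x : R3) : ℝ :=
  pd 0 (fun y => v y 0) x + pd 1 (fun y => v y 1) x + pd 2 (fun y => v y 2) x

/-- Gradient of a scalar field on ℝ³. -/
noncomputable def vgrad (f : R3 → ℝ) (x : R3) : R3 := fun i => pd i f x

/-- Euclidean dot product on ℝ³. -/
def dot3 (a b : R3) : ℝ := a 0 * b 0 + a 1 * b 1 + a 2 * b 2

/-- Cross product on ℝ³. -/
def cross3 (a b : R3) : R3 :=
  ![a 1 * b 2 - a 2 * b 1, a 2 * b 0 - a 0 * b 2, a 0 * b 1 - a 1 * b 0]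

/-- The closed unit cube Ω = [0,1]³. -/
def cube : Set R3 := Set.Icc 0 1

/-- `x` lies on one of the two faces of the cube orthogonal to direction `i`. -/
def onFace (x : R3) (i : Fin 3) : Prop := x i = 0 ∨ x i = 1

/-- `x` lies on the boundary ∂Ω of the cube. -/
def onBdry (x : R3) : Prop := x ∈ cube ∧ ∃ i : Fin 3, onFace x i

/-- Tangential boundary condition `v × n = 0` on ∂Ω: on each face of the cube
the two components of `v` tangential to that face vanish. -/
def TangentialBC (v : R3 → R3) : Prop :=
  ∀ x ∈ cube, ∀ i : Fin 3, onFace x i → ∀ j : Fin 3, j ≠ i → v x j = 0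

/-- Normal boundary condition `v · n = 0` on ∂Ω: on each face of the cube
the component of `v` normal to that face vanishes. -/
def NormalBC (v : R3 → R3) : Prop :=
  ∀ x ∈ cube, ∀ i : Fin 3, onFace x i → v x i = 0

/-- Time derivative ∂ₜu of a time-dependent vector field. -/
noncomputable def dtv (u : ℝ → R3 → R3) (t : ℝ) (x : R3) : R3 :=
  fun i => deriv (fun s => u s x i) t

/-!
Differentiating under the integral sign, `d/dt ∫_Ω |u|² = 2 ∫_Ω u · ∂ₜu`. Dotting the momentum
equation with `u` kills the Lamb term `u × curl u`, and since `div u = 0` what is left is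
`u · ∂ₜu = -u · ∇Q = -div (Q u)` with the Bernoulli function `Q = ½|u|² + p̃`. As `Q` vanishes on
`∂Ω`, so does the normal component of `Q u`, and the divergence theorem on the cube gives
`∫_Ω div (Q u) = 0`. The energy thus has zero derivative everywhere and is constant.
-/

lemma dot3_cross3_self (a b : R3) : dot3 a (cross3 a b) = 0 := by
  simp only [dot3, cross3, Matrix.cons_val_zero, Matrix.cons_val_one, Matrix.cons_val_two,
    Matrix.head_cons, Matrix.tail_cons]
  ring

theorem ContDiff.dot3 {E : Type*} [NormedAddCommGroup E] [NormedSpace ℝ E] {n : WithTop ℕ∞}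
    {f g : E → R3} (hf : ContDiff ℝ n f) (hg : ContDiff ℝ n g) :
    ContDiff ℝ n fun x => dot3 (f x) (g x) := by
  have hfi := contDiff_pi.1 hf
  have hgi := contDiff_pi.1 hg
  unfold _root_.dot3
  fun_prop

lemma hasDerivAt_dot3_self {c : ℝ → R3} {c' : R3} {t : ℝ}
    (hc : ∀ i, HasDerivAt (fun s => c s i) (c' i) t) :
    HasDerivAt (fun s => dot3 (c s) (c s)) (2 * dot3 (c t) c') t := by
  simp only [dot3]
  exact ((((hc 0).fun_mul (hc 0)).fun_add ((hc 1).fun_mul (hc 1))).fun_add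
    ((hc 2).fun_mul (hc 2))).congr_deriv (by ring)

lemma insertNth_mem_cube (i : Fin 3) {z : ℝ} (hz : z ∈ Set.Icc 0 1) {y : Fin 2 → ℝ}
    (hy : y ∈ Set.Icc ((0 : R3) ∘ i.succAbove) ((1 : R3) ∘ i.succAbove)) :
    i.insertNth z y ∈ cube := by
  refine ⟨fun j => ?_, fun j => ?_⟩ <;> cases j using i.succAboveCases
  all_goals simp only [Fin.insertNth_apply_same, Fin.insertNth_apply_succAbove, Pi.zero_apply,
    Pi.one_apply]
  exacts [hz.1, hy.1 _, hz.2, hy.2 _]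

theorem integral_vdiv_eq_zero_of_normalBC (F : R3 → R3) (hF : ContDiff ℝ 1 F)
    (hbc : NormalBC F) :
    ∫ x in cube, vdiv F x = 0 := by
  have hFi : ∀ i, ContDiff ℝ 1 fun x => F x i := contDiff_pi.1 hF
  have hdiv := integral_divergence_of_hasFDerivAt_off_countable' (a := (0 : R3)) (b := 1)
    zero_le_one (fun i x => F x i) (fun i x => fderiv ℝ (fun y => F y i) x) ∅
    Set.countable_empty (fun i => (hFi i).continuous.continuousOn)
    (fun x _ i => ((hFi i).differentiable one_ne_zero x).hasFDerivAt)
    (by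
      refine Continuous.integrableOn_Icc (continuous_finsetSum _ fun i _ => ?_)
      exact ((hFi i).continuous_fderiv one_ne_zero).clm_apply continuous_const)
  have hface : ∀ (i : Fin 3) (z : ℝ), z = 0 ∨ z = 1 →
      ∫ y in Set.Icc ((0 : R3) ∘ i.succAbove) ((1 : R3) ∘ i.succAbove),
        F (i.insertNth z y) i = 0 := by
    intro i z hz
    refine setIntegral_eq_zero_of_forall_eq_zero fun y hy =>
      hbc _ (insertNth_mem_cube i ?_ hy) i ?_
    · rcases hz with rfl | rfl <;> simp
    · simpa [onFace] using hz
  have hvdiv : vdiv F = fun x => ∑ i, fderiv ℝ (fun y => F y i) x (Pi.single i 1) := by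
    ext x
    simp only [vdiv, pd, Fin.sum_univ_three]
  rw [cube, hvdiv, hdiv]
  refine Finset.sum_eq_zero fun i _ => ?_
  rw [hface i ((1 : R3) i) (Or.inr rfl), hface i ((0 : R3) i) (Or.inl rfl), sub_zero]

lemma vdiv_smul {Q : R3 → ℝ} {v : R3 → R3} {x : R3} (hQ : DifferentiableAt ℝ Q x)
    (hv : ∀ i, DifferentiableAt ℝ (fun y => v y i) x) :
    vdiv (fun y => Q y • v y) x = dot3 (vgrad Q x) (v x) + Q x * vdiv v x := by
  simp only [vdiv, vgrad, dot3, pd, Pi.smul_apply, smul_eq_mul, fderiv_fun_mul hQ (hv _),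
    add_apply, smul_apply, smul_eq_mul]
  ring

lemma normalBC_smul {Q : R3 → ℝ} (v : R3 → R3) (hQ : ∀ x, onBdry x → Q x = 0) :
    NormalBC fun x => Q x • v x := fun x hx i hi => by
  simp [hQ x ⟨hx, i, hi⟩]

lemma dot3_eq_neg_vdiv_smul_of_euler {v : R3 → R3} {Q : R3 → ℝ} {x a : R3}
    (hQ : DifferentiableAt ℝ Q x) (hv : ∀ i, DifferentiableAt ℝ (fun y => v y i) x)
    (hmom : a - cross3 (v x) (vcurl v x) + vgrad Q x = 0) (hdiv : vdiv v x = 0) :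
    dot3 (v x) a = -vdiv (fun y => Q y • v y) x := by
  have ha : ∀ i, a i = cross3 (v x) (vcurl v x) i - vgrad Q x i := fun i => by
    have := congrFun hmom i
    simp only [Pi.add_apply, Pi.sub_apply, Pi.zero_apply] at this
    linarith
  have hperp := dot3_cross3_self (v x) (vcurl v x)
  rw [vdiv_smul hQ hv, hdiv]
  simp only [dot3] at hperp ⊢
  rw [ha 0, ha 1, ha 2]
  linear_combination hperp

theorem integral_dot3_eq_zero_of_euler {v a : R3 → R3} {Q : R3 → ℝ} (hv : ContDiff ℝ 1 v)
    (hQ : ContDiff ℝ 1 Q) (hmom : ∀ x ∈ cube, a x - cross3 (v x) (vcurl v x) + vgrad Q x = 0)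
    (hdiv : ∀ x ∈ cube, vdiv v x = 0) (hbc : ∀ x, onBdry x → Q x = 0) :
    ∫ x in cube, dot3 (v x) (a x) = 0 := by
  have hvi : ∀ i, ContDiff ℝ 1 fun x => v x i := contDiff_pi.1 hv
  calc ∫ x in cube, dot3 (v x) (a x) = ∫ x in cube, -vdiv (fun y => Q y • v y) x :=
        setIntegral_congr_fun measurableSet_Icc fun x hx =>
          dot3_eq_neg_vdiv_smul_of_euler (hQ.differentiable one_ne_zero x)
            (fun i => (hvi i).differentiable one_ne_zero x) (hmom x hx) (hdiv x hx)
    _ = 0 := by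
      rw [integral_neg, integral_vdiv_eq_zero_of_normalBC (fun y => Q y • v y) (hQ.smul hv)
        (normalBC_smul v hbc), neg_zero]

lemma hasDerivAt_dtv {u : ℝ → R3 → R3} (hu : Differentiable ℝ (Function.uncurry u))
    (t : ℝ) (x : R3) (i : Fin 3) : HasDerivAt (fun s => u s x i) (dtv u t x i) t := by
  have h : DifferentiableAt ℝ (Function.uncurry u ∘ fun s => (s, x)) t :=
    (hu (t, x)).comp t ((hasDerivAt_id' t).prodMk (hasDerivAt_const t x)).differentiableAt
  exact (differentiableAt_pi.1 h i).hasDerivAt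

theorem hasDerivAt_setIntegral_of_contDiff {E : Type*} [NormedAddCommGroup E] [NormedSpace ℝ E]
    [MeasurableSpace E] [BorelSpace E] {μ : Measure E} [IsFiniteMeasureOnCompacts μ]
    {K : Set E} (hK : IsCompact K) {G : ℝ → E → ℝ} (hG : ContDiff ℝ 1 (Function.uncurry G))
    (t : ℝ) :
    HasDerivAt (fun s => ∫ x in K, G s x ∂μ) (∫ x in K, deriv (fun s => G s x) t ∂μ) t := by
  set φ : ℝ × E → ℝ := fun p => fderiv ℝ (Function.uncurry G) p (1, 0)
  have hφ : Continuous φ := (hG.continuous_fderiv one_ne_zero).clm_apply continuous_const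
  have hGφ : ∀ s x, HasDerivAt (fun s => G s x) (φ (s, x)) s := fun s x =>
    (hG.differentiable one_ne_zero (s, x)).hasFDerivAt.comp_hasDerivAt
      (l := Function.uncurry G) s ((hasDerivAt_id' s).prodMk (hasDerivAt_const s x))
  have hslice : ∀ s, Continuous (G s) := fun s =>
    hG.continuous.comp (continuous_const.prodMk continuous_id)
  obtain ⟨C, hC⟩ : ∃ C, ∀ p ∈ Set.Icc (t - 1) (t + 1) ×ˢ K, ‖φ p‖ ≤ C :=
    (isCompact_Icc.prod hK).exists_bound_of_continuousOn hφ.continuousOn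
  have h := hasDerivAt_integral_of_dominated_loc_of_deriv_le (μ := μ.restrict K)
    (F' := fun s x => φ (s, x)) (bound := fun _ => C) (Metric.ball_mem_nhds t one_pos)
    (.of_forall fun s => (hslice s).aestronglyMeasurable)
    ((hslice t).continuousOn.integrableOn_compact hK)
    (hφ.comp (continuous_const.prodMk continuous_id)).aestronglyMeasurable
    (ae_restrict_of_forall_mem hK.measurableSet fun x hx s hs => hC (s, x)
      ⟨Set.Ioo_subset_Icc_self (Real.ball_eq_Ioo t 1 ▸ hs), hx⟩)
    (integrableOn_const hK.measure_lt_top.ne) (.of_forall fun x s _ => hGφ s x)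
  simpa only [fun x => (hGφ t x).deriv] using h.2

theorem euler_energy_conservation_general
    (u : ℝ → R3 → R3) (pt : ℝ → R3 → ℝ)
    (hu : ContDiff ℝ 2 (Function.uncurry u))
    (hp : ContDiff ℝ 1 (Function.uncurry pt))
    (hmom : ∀ t : ℝ, ∀ x ∈ cube,
      dtv u t x - cross3 (u t x) (vcurl (u t) x)
        + vgrad (fun y => (1 / 2) * dot3 (u t y) (u t y) + pt t y) x = 0)
    (hdiv : ∀ t : ℝ, ∀ x ∈ cube, vdiv (u t) x = 0)
    (hbcp : ∀ t : ℝ, ∀ x : R3, onBdry x →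
      (1 / 2) * dot3 (u t x) (u t x) + pt t x = 0) :
    ∀ t : ℝ,
      ∫ x in cube, dot3 (u t x) (u t x) = ∫ x in cube, dot3 (u 0 x) (u 0 x) := by
  have hu1 : ContDiff ℝ 1 (Function.uncurry u) := hu.of_le one_le_two
  have hus : ∀ s, ContDiff ℝ 1 (u s) := fun s => hu1.comp (contDiff_prodMk_right s)
  have hQ : ∀ s, ContDiff ℝ 1 fun y => (1 / 2) * dot3 (u s y) (u s y) + pt s y := fun s =>
    (contDiff_const.mul ((hus s).dot3 (hus s))).add (hp.comp (contDiff_prodMk_right s))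
  have hE : ∀ s, HasDerivAt (fun s => ∫ x in cube, dot3 (u s x) (u s x)) 0 s := by
    intro s
    have h := hasDerivAt_setIntegral_of_contDiff (μ := volume) (K := cube)
      (G := fun s x => dot3 (u s x) (u s x)) isCompact_Icc (hu1.dot3 hu1) s
    have hpower := integral_dot3_eq_zero_of_euler (hus s) (hQ s) (hmom s) (hdiv s) (hbcp s)
    rwa [setIntegral_congr_fun (s := cube) measurableSet_Icc fun x _ =>
      (hasDerivAt_dot3_self (hasDerivAt_dtv (hu1.differentiable one_ne_zero) s x)).deriv,
      integral_const_mul, hpower, mul_zero] at h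
  exact fun t => is_const_of_deriv_eq_zero (fun s => (hE s).differentiableAt)
    (fun s => (hE s).deriv) t 0

/-- For the ideal (Euler) equations on the unit cube, the kinetic energy is
conserved in time. -/
theorem euler_energy_conservation
    (u : ℝ → R3 → R3) (pt : ℝ → R3 → ℝ)
    (hu : ContDiff ℝ 2 (Function.uncurry u))
    (hp : ContDiff ℝ 1 (Function.uncurry pt))
    (hmom : ∀ t : ℝ, ∀ x ∈ cube,
      dtv u t x - cross3 (u t x) (vcurl (u t) x)
        + vgrad (fun y => (1 / 2) * dot3 (u t y) (u t y) + pt t y) x = 0)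
    (hdiv : ∀ t : ℝ, ∀ x ∈ cube, vdiv (u t) x = 0)
    (hbcu : ∀ t : ℝ, TangentialBC (u t))
    (hbcp : ∀ t : ℝ, ∀ x : R3, onBdry x →
      (1 / 2) * dot3 (u t x) (u t x) + pt t x = 0) :
    ∀ t : ℝ,
      ∫ x in cube, dot3 (u t x) (u t x) = ∫ x in cube, dot3 (u 0 x) (u 0 x) :=
  euler_energy_conservation_general u pt hu hp hmom hdiv hbcp
end
end

section
/- Let Re > 0 and Δt > 0, let u⁰, u¹ : ℝ³ → ℝ³ be twice continuously differentiable on an open neighborhood of the closed unit cube Ω = [0,1]³, let p : ℝ³ → ℝ be continuously differentiable there, and set ū := (u⁰ + u¹)/2. Suppose the strong-form midpoint time-discrete Navier–Stokes equation holds at every point of Ω: (u¹ − u⁰)/Δt − ū × (curl ū) + ∇p + Re⁻¹ curl(curl ū) = 0, and both u⁰ and u¹ satisfy the tangential boundary condition u⁰ × n = 0 and u¹ × n = 0 on ∂Ω. Then the discrete helicity identity holds: (1/Δt) ( ∫_Ω u¹ · (curl u¹) dx − ∫_Ω u⁰ · (curl u⁰) dx ) = −2 ∫_Ω ∇p ·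 (curl ū) dx − 2 Re⁻¹ ∫_Ω (curl ū) · (curl(curl ū)) dx. -/
open MeasureTheory

noncomputable section

/-!
Dotting the momentum equation with `curl ū` kills the convective term `ū × curl ū`, so
pointwise `(u¹ - u⁰) · curl ū = -Δt (∇p · curl ū + Re⁻¹ curl ū · curl curl ū)`.
Since `curl ū` is the average of `curl u⁰` and `curl u¹`,
`H(u¹) - H(u⁰) = 2 ∫ (u¹ - u⁰) · curl ū + ∫ (u⁰ · curl u¹ - u¹ · curl u⁰)`, and the last
integral is `-∫ div (u⁰ × u¹)`, which vanishes by the divergence theorem: the normal component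
of `u⁰ × u¹` is zero on `∂Ω` because `u⁰ × n = 0` there.
-/

open Set
open scoped Matrix

section Calculus

variable {f g : R3 → ℝ} {v w : R3 → R3} {x : R3}

lemma pd_add (hf : DifferentiableAt ℝ f x) (hg : DifferentiableAt ℝ g x) (i : Fin 3) :
    pd i (fun y => f y + g y) x = pd i f x + pd i g x := by
  simp only [pd, fderiv_fun_add hf hg, add_apply]

lemma pd_sub (hf : DifferentiableAt ℝ f x) (hg : DifferentiableAt ℝ g x) (i : Fin 3) :
    pd i (fun y => f y - g y) x = pd i f x - pd i g x := by
  simp only [pd, fderiv_fun_sub hf hg, sub_apply]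

lemma pd_mul (hf : DifferentiableAt ℝ f x) (hg : DifferentiableAt ℝ g x) (i : Fin 3) :
    pd i (fun y => f y * g y) x = pd i f x * g x + f x * pd i g x := by
  simp only [pd, fderiv_fun_mul hf hg, add_apply, smul_apply, smul_eq_mul]
  ring

lemma pd_const_mul (hf : DifferentiableAt ℝ f x) (c : ℝ) (i : Fin 3) :
    pd i (fun y => c * f y) x = c * pd i f x := by
  simp only [pd, fderiv_const_mul hf c, smul_apply, smul_eq_mul]

lemma vcurl_const_smul_add (hv : DifferentiableAt ℝ v x) (hw : DifferentiableAt ℝ w x) (c : ℝ) :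
    vcurl (fun y => c • (v y + w y)) x = c • (vcurl v x + vcurl w x) := by
  have hpd (i j : Fin 3) :
      pd i (fun y => (c • (v y + w y)) j) x = c * (pd i (v · j) x + pd i (w · j) x) := by
    have hvj := differentiableAt_pi.1 hv j
    have hwj := differentiableAt_pi.1 hw j
    rw [← pd_add hvj hwj]
    exact pd_const_mul (f := fun y => v y j + w y j) (hvj.add hwj) c i
  simp only [vcurl, hpd]
  ext i
  fin_cases i <;>
    simp only [Fin.zero_eta, Fin.mk_one, Fin.reduceFinMk, Matrix.cons_val, Matrix.cons_val_zero,
      Matrix.cons_val_one, Matrix.add_cons, Matrix.head_cons, Matrix.tail_cons, Pi.smul_apply,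
      smul_eq_mul] <;>
    ring

lemma vdiv_cross3 (hv : DifferentiableAt ℝ v x) (hw : DifferentiableAt ℝ w x) :
    vdiv (fun y => cross3 (v y) (w y)) x = dot3 (w x) (vcurl v x) - dot3 (v x) (vcurl w x) := by
  have hpd (i j k l m : Fin 3) :
      pd i (fun y => v y j * w y k - v y l * w y m) x
        = pd i (v · j) x * w x k + v x j * pd i (w · k) x
          - (pd i (v · l) x * w x m + v x l * pd i (w · m) x) := by
    have hv' := differentiableAt_pi.1 hv
    have hw' := differentiableAt_pi.1 hw
    rw [pd_sub (f := fun y => v y j * w y k) (g := fun y => v y l * w y m)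
      ((hv' j).mul (hw' k)) ((hv' l).mul (hw' m)), pd_mul (hv' j) (hw' k), pd_mul (hv' l) (hw' m)]
  simp only [vdiv, cross3, vcurl, dot3, Matrix.cons_val_zero, Matrix.cons_val_one,
    Matrix.cons_val_two, Matrix.head_cons, Matrix.tail_cons, hpd]
  ring

end Calculus

section Regularity

variable {f : R3 → ℝ} {v : R3 → R3} {U : Set R3} {n : WithTop ℕ∞}

lemma contDiffOn_pd (hU : IsOpen U) (hf : ContDiffOn ℝ (n + 1) f U) (i : Fin 3) :
    ContDiffOn ℝ n (pd i f) U :=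
  (hf.fderiv_of_isOpen hU le_rfl).clm_apply contDiffOn_const

lemma contDiffOn_vgrad (hU : IsOpen U) (hf : ContDiffOn ℝ (n + 1) f U) :
    ContDiffOn ℝ n (vgrad f) U :=
  contDiffOn_pi.2 (contDiffOn_pd hU hf)

lemma contDiffOn_vcurl (hU : IsOpen U) (hv : ContDiffOn ℝ (n + 1) v U) :
    ContDiffOn ℝ n (vcurl v) U := by
  have hpd (i j : Fin 3) : ContDiffOn ℝ n (pd i (v · j)) U :=
    contDiffOn_pd hU (contDiffOn_pi.1 hv j) i
  refine contDiffOn_pi.2 fun i => ?_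
  fin_cases i
  exacts [(hpd 1 2).sub (hpd 2 1), (hpd 2 0).sub (hpd 0 2), (hpd 0 1).sub (hpd 1 0)]

lemma measurableSet_cube : MeasurableSet cube :=
  measurableSet_Icc

lemma integrableOn_cube_dot3 {a b : R3 → R3} (ha : ContinuousOn a cube)
    (hb : ContinuousOn b cube) : IntegrableOn (fun x => dot3 (a x) (b x)) cube := by
  refine ContinuousOn.integrableOn_compact isCompact_Icc ?_
  have hcomp (c : R3 → R3) (hc : ContinuousOn c cube) (i : Fin 3) :
      ContinuousOn (fun x => c x i) cube :=
    (continuous_apply i).comp_continuousOn hc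
  unfold dot3
  fun_prop (disch := assumption)

end Regularity

section Divergence

lemma dot3_eq_dotProduct (a b : R3) : dot3 a b = a ⬝ᵥ b := by
  simp [dot3, dotProduct, Fin.sum_univ_three]

lemma cross3_eq_crossProduct (a b : R3) : cross3 a b = a ⨯₃ b :=
  (cross_apply a b).symm

lemma dot3_eq_of_momentum {d a c g k : R3} {τ r : ℝ} (hτ : τ ≠ 0)
    (h : τ⁻¹ • d - cross3 a c + g + r • k = 0) :
    dot3 d c = τ * (-dot3 g c - r * dot3 c k) := by
  have hc := congrArg (· ⬝ᵥ c) h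
  simp only [add_dotProduct, sub_dotProduct, smul_dotProduct, zero_dotProduct, smul_eq_mul,
    cross3_eq_crossProduct, dotProduct_comm (a ⨯₃ c), dot_cross_self] at hc
  simp only [dot3_eq_dotProduct, dotProduct_comm c k]
  field_simp at hc
  linear_combination hc

lemma normalBC_cross3 {v : R3 → R3} (hv : TangentialBC v) (w : R3 → R3) :
    NormalBC (fun x => cross3 (v x) (w x)) := by
  intro x hx i hi
  fin_cases i <;> simp [cross3, hv x hx _ hi]

lemma integral_vdiv_eq_zero {F : R3 → R3} (hFc : ContinuousOn F cube)
    (hFd : ∀ x ∈ interior cube, DifferentiableAt ℝ F x) (hdiv : IntegrableOn (vdiv F) cube)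
    (hbc : NormalBC F) : ∫ x in cube, vdiv F x = 0 := by
  have hvdiv : vdiv F = fun x => ∑ i, pd i (F · i) x := by
    ext x; simp [vdiv, Fin.sum_univ_three]
  have hbox : (Set.pi univ fun i => Ioo ((0 : R3) i) ((1 : R3) i)) ⊆ interior cube :=
    interior_maximal (fun x hx => ⟨fun i => (hx i trivial).1.le, fun i => (hx i trivial).2.le⟩)
      (isOpen_set_pi finite_univ fun _ _ => isOpen_Ioo)
  have hface (i : Fin 3) (c : ℝ) (hc : c = 0 ∨ c = 1) :
      ∫ y in Icc ((0 : R3) ∘ i.succAbove) ((1 : R3) ∘ i.succAbove), F (i.insertNth c y) i = 0 := by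
    refine setIntegral_eq_zero_of_forall_eq_zero fun y hy => hbc _ ?_ i ?_
    · refine Fin.insertNth_mem_Icc.2 ⟨?_, hy⟩
      rcases hc with rfl | rfl <;> simp
    · rwa [onFace, Fin.insertNth_apply_same]
  rw [hvdiv] at hdiv ⊢
  refine (integral_divergence_of_hasFDerivAt_off_countable' 0 1 zero_le_one (fun i x => F x i)
    (fun i x => fderiv ℝ (F · i) x) ∅ countable_empty
    (fun i => (continuous_apply i).comp_continuousOn hFc)
    (fun x hx i => (differentiableAt_pi.1 (hFd x (hbox hx.1)) i).hasFDerivAt) hdiv).trans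
    (Finset.sum_eq_zero fun i _ => ?_)
  rw [hface i ((1 : R3) i) (Or.inr rfl), hface i ((0 : R3) i) (Or.inl rfl), sub_self]

end Divergence

section CurlPairing

variable {v w : R3 → R3} {U : Set R3}

lemma differentiableAt_cross3 {x : R3} (hv : DifferentiableAt ℝ v x)
    (hw : DifferentiableAt ℝ w x) : DifferentiableAt ℝ (fun y => cross3 (v y) (w y)) x := by
  have hv' := differentiableAt_pi.1 hv
  have hw' := differentiableAt_pi.1 hw
  refine differentiableAt_pi.2 fun i => ?_
  fin_cases i <;>
    simp only [cross3, Fin.zero_eta, Fin.mk_one, Fin.reduceFinMk, Matrix.cons_val] <;>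
    fun_prop

lemma integrableOn_dot3_vcurl {a : R3 → R3} (hU : IsOpen U) (hc : cube ⊆ U)
    (ha : ContinuousOn a cube) (hw : ContDiffOn ℝ 1 w U) :
    IntegrableOn (fun x => dot3 (a x) (vcurl w x)) cube :=
  integrableOn_cube_dot3 ha ((contDiffOn_vcurl (n := 0) hU hw).continuousOn.mono hc)

lemma integral_dot3_vcurl_comm (hU : IsOpen U) (hc : cube ⊆ U) (hv : ContDiffOn ℝ 1 v U)
    (hw : ContDiffOn ℝ 1 w U) (hbc : TangentialBC v) :
    ∫ x in cube, dot3 (v x) (vcurl w x) = ∫ x in cube, dot3 (w x) (vcurl v x) := by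
  have hdv (x) (hx : x ∈ U) := (hv.differentiableOn one_ne_zero).differentiableAt (hU.mem_nhds hx)
  have hdw (x) (hx : x ∈ U) := (hw.differentiableOn one_ne_zero).differentiableAt (hU.mem_nhds hx)
  have hdF (x) (hx : x ∈ U) := differentiableAt_cross3 (hdv x hx) (hdw x hx)
  have hvw := integrableOn_dot3_vcurl hU hc (hv.continuousOn.mono hc) hw
  have hwv := integrableOn_dot3_vcurl hU hc (hw.continuousOn.mono hc) hv
  have hdiv : EqOn (vdiv fun x => cross3 (v x) (w x))
      (fun x => dot3 (w x) (vcurl v x) - dot3 (v x) (vcurl w x)) cube :=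
    fun x hx => vdiv_cross3 (hdv x (hc hx)) (hdw x (hc hx))
  have hzero := integral_vdiv_eq_zero
    (fun x hx => (hdF x (hc hx)).continuousAt.continuousWithinAt)
    (fun x hx => hdF x (hc (interior_subset hx)))
    ((hwv.fun_sub hvw).congr_fun hdiv.symm measurableSet_cube) (normalBC_cross3 hbc w)
  rw [setIntegral_congr_fun measurableSet_cube hdiv, integral_sub hwv hvw] at hzero
  linarith

lemma helicity_sub_eq_midpoint (hU : IsOpen U) (hc : cube ⊆ U) (hv : ContDiffOn ℝ 1 v U)
    (hw : ContDiffOn ℝ 1 w U) (hbc : TangentialBC v) :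
    (∫ x in cube, dot3 (w x) (vcurl w x)) - ∫ x in cube, dot3 (v x) (vcurl v x)
      = 2 * ∫ x in cube, dot3 (w x - v x) (vcurl (fun y => (2 : ℝ)⁻¹ • (v y + w y)) x) := by
  have hmid : EqOn (fun x => dot3 (w x - v x) (vcurl (fun y => (2 : ℝ)⁻¹ • (v y + w y)) x))
      (fun x => 2⁻¹ * ((dot3 (w x) (vcurl w x) - dot3 (v x) (vcurl v x))
        + (dot3 (w x) (vcurl v x) - dot3 (v x) (vcurl w x)))) cube := by
    intro x hx
    have hd {u : R3 → R3} (hu : ContDiffOn ℝ 1 u U) : DifferentiableAt ℝ u x :=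
      (hu.differentiableOn one_ne_zero).differentiableAt (hU.mem_nhds (hc hx))
    simp only [vcurl_const_smul_add (hd hv) (hd hw), dot3, Pi.sub_apply, Pi.smul_apply,
      Pi.add_apply, smul_eq_mul]
    ring
  have hI {a b : R3 → R3} (ha : ContDiffOn ℝ 1 a U) (hb : ContDiffOn ℝ 1 b U) :=
    integrableOn_dot3_vcurl hU hc (ha.continuousOn.mono hc) hb
  rw [setIntegral_congr_fun measurableSet_cube hmid, integral_const_mul,
    integral_add ((hI hw hw).fun_sub (hI hv hv)) ((hI hw hv).fun_sub (hI hv hw)),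
    integral_sub (hI hw hw) (hI hv hv), integral_sub (hI hw hv) (hI hv hw),
    integral_dot3_vcurl_comm hU hc hv hw hbc]
  ring

end CurlPairing

theorem discrete_helicity_identity_general (Re Δt : ℝ) (hΔt : 0 < Δt)
    (u0 u1 ub : R3 → R3) (p : R3 → ℝ) (U : Set R3)
    (hU : IsOpen U) (hcube : cube ⊆ U)
    (hu0 : ContDiffOn ℝ 2 u0 U) (hu1 : ContDiffOn ℝ 2 u1 U)
    (hp : ContDiffOn ℝ 1 p U)
    (hub : ub = fun x => (2 : ℝ)⁻¹ • (u0 x + u1 x))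
    (hmom : ∀ x ∈ cube,
      Δt⁻¹ • (u1 x - u0 x) - cross3 (ub x) (vcurl ub x) + vgrad p x
        + Re⁻¹ • vcurl (vcurl ub) x = 0)
    (hbc0 : TangentialBC u0) :
    ((∫ x in cube, dot3 (u1 x) (vcurl u1 x))
        - ∫ x in cube, dot3 (u0 x) (vcurl u0 x)) / Δt
      = -2 * (∫ x in cube, dot3 (vgrad p x) (vcurl ub x))
        - 2 * Re⁻¹ * ∫ x in cube, dot3 (vcurl ub x) (vcurl (vcurl ub) x) := by
  have hub2 : ContDiffOn ℝ 2 ub U := hub ▸ (hu0.add hu1).const_smul _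
  have hcurl : ContDiffOn ℝ 1 (vcurl ub) U := contDiffOn_vcurl hU hub2
  have hP := integrableOn_dot3_vcurl hU hcube
    ((contDiffOn_vgrad (n := 0) hU hp).continuousOn.mono hcube) (hub2.of_le one_le_two)
  have hQ := integrableOn_dot3_vcurl hU hcube (hcurl.continuousOn.mono hcube) hcurl
  have hpt : EqOn (fun x => dot3 (u1 x - u0 x) (vcurl ub x))
      (fun x => Δt * (-dot3 (vgrad p x) (vcurl ub x)
        - Re⁻¹ * dot3 (vcurl ub x) (vcurl (vcurl ub) x))) cube :=
    fun x hx => dot3_eq_of_momentum hΔt.ne' (hmom x hx)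
  rw [helicity_sub_eq_midpoint hU hcube (hu0.of_le one_le_two) (hu1.of_le one_le_two) hbc0, ← hub,
    setIntegral_congr_fun measurableSet_cube hpt, integral_const_mul,
    integral_sub hP.fun_neg (hQ.const_mul _), integral_neg, integral_const_mul]
  field_simp

/-- Discrete helicity identity for the strong-form midpoint time-discrete
Navier–Stokes equation (the PINN loss form): with ū = (u⁰+u¹)/2,
(H(u¹) − H(u⁰))/Δt = −2∫∇p·(curl ū) − 2Re⁻¹∫(curl ū)·(curl curl ū). -/
theorem discrete_helicity_identity (Re Δt : ℝ) (hRe : 0 < Re) (hΔt : 0 < Δt)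
    (u0 u1 ub : R3 → R3) (p : R3 → ℝ) (U : Set R3)
    (hU : IsOpen U) (hcube : cube ⊆ U)
    (hu0 : ContDiffOn ℝ 2 u0 U) (hu1 : ContDiffOn ℝ 2 u1 U)
    (hp : ContDiffOn ℝ 1 p U)
    (hub : ub = fun x => (2 : ℝ)⁻¹ • (u0 x + u1 x))
    (hmom : ∀ x ∈ cube,
      Δt⁻¹ • (u1 x - u0 x) - cross3 (ub x) (vcurl ub x) + vgrad p x
        + Re⁻¹ • vcurl (vcurl ub) x = 0)
    (hbc0 : TangentialBC u0) (hbc1 : TangentialBC u1) :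
    ((∫ x in cube, dot3 (u1 x) (vcurl u1 x))
        - ∫ x in cube, dot3 (u0 x) (vcurl u0 x)) / Δt
      = -2 * (∫ x in cube, dot3 (vgrad p x) (vcurl ub x))
        - 2 * Re⁻¹ * ∫ x in cube, dot3 (vcurl ub x) (vcurl (vcurl ub) x) :=
  discrete_helicity_identity_general Re Δt hΔt u0 u1 ub p U hU hcube hu0 hu1 hp hub hmom hbc0
end
end
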